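/- arXiv:1505.01983 — 8 statements merged into one kernel-verified Lean document; each statement's English description precedes it below -/
import Mathlib

section
/- Let Ω be continuous and negative on J with |Ω|^{-1/2} decreasing (i.e. Ω decreasing), and let h solve h' = 1 + Ω h² on J. If h'(x₋) < 0 at some x₋ ∈ J, then h'(x) < 0 and h(x) ≠ 0 for all x ∈ J with x > x₋. -/
open Topology Filter Set

/-- Let `Ω` be continuous, negative and decreasing on an interval `J`, and let `h`
solve the Riccati equation `h' = 1 + Ω h²` on `J`. If `h'(x₋) < 0` at some
`x₋ ∈ J`, then `h'(x) < 0` and `h(x) ≠ 0` for all `x ∈ J` with `x > x₋`. -/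
theorem stmt5 (J : Set ℝ) (hJ : Convex ℝ J)
    (Ω h : ℝ → ℝ) (hΩc : ContinuousOn Ω J) (hΩ : ∀ x ∈ J, Ω x < 0)
    (hΩdec : StrictAntiOn Ω J)
    (hh : ∀ x ∈ J, HasDerivAt h (1 + Ω x * h x ^ 2) x)
    (xm : ℝ) (hxm : xm ∈ J) (hneg : deriv h xm < 0) :
    ∀ x ∈ J, xm < x → deriv h x < 0 ∧ h x ≠ 0 := by
  intro x hx hxx
  set g : ℝ → ℝ := fun t => 1 + Ω t * h t ^ 2 with hgdef
  have hhc : ContinuousOn h J := fun t ht => ((hh t ht).continuousAt).continuousWithinAt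
  have hgc : ContinuousOn g J := continuousOn_const.add (hΩc.mul (hhc.pow 2))
  have hIJ : Set.Icc xm x ⊆ J := hJ.ordConnected.out hxm hx
  have hgm : g xm < 0 := by
    show 1 + Ω xm * h xm ^ 2 < 0
    rw [← (hh xm hxm).deriv]; exact hneg
  -- main claim
  have key : ∀ t ∈ Set.Icc xm x, g t < 0 := by
    by_contra hcon
    push_neg at hcon
    obtain ⟨t₁, ht₁, ht₁0⟩ := hcon
    have hScl : IsClosed {t | t ∈ Set.Icc xm x ∧ 0 ≤ g t} := by
      have heq : {t | t ∈ Set.Icc xm x ∧ 0 ≤ g t} = Set.Icc xm x ∩ g ⁻¹' (Set.Ici 0) := rfl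
      rw [heq]
      exact ContinuousOn.preimage_isClosed_of_isClosed (hgc.mono hIJ) isClosed_Icc isClosed_Ici
    have hSne : Set.Nonempty {t | t ∈ Set.Icc xm x ∧ 0 ≤ g t} := ⟨t₁, ht₁, ht₁0⟩
    have hSbd : BddBelow {t | t ∈ Set.Icc xm x ∧ 0 ≤ g t} := ⟨xm, fun t ht => ht.1.1⟩
    obtain ⟨hx₀S, hx₀min⟩ : sInf {t | t ∈ Set.Icc xm x ∧ 0 ≤ g t} ∈
        {t | t ∈ Set.Icc xm x ∧ 0 ≤ g t} ∧
        ∀ t ∈ {t | t ∈ Set.Icc xm x ∧ 0 ≤ g t}, sInf {t | t ∈ Set.Icc xm x ∧ 0 ≤ g t} ≤ t :=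
      ⟨hScl.csInf_mem hSne hSbd, fun t ht => csInf_le hSbd ht⟩
    set x₀ : ℝ := sInf {t | t ∈ Set.Icc xm x ∧ 0 ≤ g t} with hx₀def
    have hx₀I : x₀ ∈ Set.Icc xm x := hx₀S.1
    have hx₀J : x₀ ∈ J := hIJ hx₀I
    have hx₀g : 0 ≤ g x₀ := hx₀S.2
    have hxmx₀ : xm < x₀ := lt_of_le_of_ne hx₀I.1 (by intro he; rw [← he] at hx₀g; exact absurd hx₀g (not_le.2 hgm))
    have hIcoJ : Set.Icc xm x₀ ⊆ J := fun t ht => hIJ ⟨ht.1, le_trans ht.2 hx₀I.2⟩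
    -- g < 0 strictly before x₀
    have hbefore : ∀ t ∈ Set.Ico xm x₀, g t < 0 := by
      intro t ht
      by_contra h0
      push_neg at h0
      exact absurd (hx₀min t ⟨⟨ht.1, le_trans ht.2.le hx₀I.2⟩, h0⟩) (not_le.2 ht.2)
    -- g x₀ = 0
    have hgx₀ : g x₀ = 0 := by
      refine le_antisymm ?_ hx₀g
      have hne : (𝓝[Set.Ico xm x₀] x₀).NeBot := by
        rw [← mem_closure_iff_nhdsWithin_neBot, closure_Ico (ne_of_lt hxmx₀)]
        exact ⟨hxmx₀.le, le_refl _⟩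
      have hct : Filter.Tendsto g (𝓝[Set.Ico xm x₀] x₀) (𝓝 (g x₀)) :=
        ((hgc x₀ hx₀J).mono (fun t ht => hIcoJ ⟨ht.1, ht.2.le⟩)).tendsto
      exact le_of_tendsto hct (Filter.eventually_of_mem self_mem_nhdsWithin
        (fun t ht => (hbefore t ht).le))
    -- h strictly decreasing on [xm, x₀]
    have hanti : StrictAntiOn h (Set.Icc xm x₀) := by
      apply strictAntiOn_of_deriv_neg (convex_Icc _ _) (hhc.mono hIcoJ)
      intro t ht
      rw [interior_Icc] at ht
      rw [(hh t (hIcoJ ⟨ht.1.le, ht.2.le⟩)).deriv]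
      exact hbefore t ⟨ht.1.le, ht.2⟩
    have hmemm : xm ∈ Set.Icc xm x₀ := ⟨le_refl _, hxmx₀.le⟩
    have hmem₀ : x₀ ∈ Set.Icc xm x₀ := ⟨hxmx₀.le, le_refl _⟩
    have hΩ₀ : Ω x₀ * h x₀ ^ 2 = -1 := by
      have h' : 1 + Ω x₀ * h x₀ ^ 2 = 0 := hgx₀
      linarith
    have hx₀ne : h x₀ ≠ 0 := by
      intro h0; rw [h0] at hΩ₀; norm_num at hΩ₀
    have hgm' : 1 + Ω xm * h xm ^ 2 < 0 := hgm
    rcases lt_or_gt_of_ne hx₀ne with hcaseA | hcaseB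
    · -- Case A : h x₀ < 0
      have hxmneg : h xm < 0 := by
        rcases lt_trichotomy (h xm) 0 with h1 | h1 | h1
        · exact h1
        · exfalso; rw [h1] at hgm'; norm_num at hgm'
        · exfalso
          have hsub : Set.Icc (h x₀) (h xm) ⊆ h '' Set.Icc xm x₀ :=
            intermediate_value_Icc' hxmx₀.le (hhc.mono hIcoJ)
          obtain ⟨s, hs, hs0⟩ := hsub ⟨hcaseA.le, h1.le⟩
          rcases eq_or_lt_of_le hs.2 with h2 | h2
          · rw [h2] at hs0; rw [hs0] at hcaseA; exact lt_irrefl _ hcaseA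
          · have h3 : 1 + Ω s * h s ^ 2 < 0 := hbefore s ⟨hs.1, h2⟩
            rw [hs0] at h3; norm_num at h3
      have h₀m : h x₀ < h xm := hanti hmemm hmem₀ hxmx₀
      have hΩlt : Ω x₀ < Ω xm := hΩdec hxm hx₀J hxmx₀
      have hΩmneg : Ω xm < 0 := hΩ xm hxm
      -- Ω x₀ h x₀² = -1, h x₀ < h xm < 0, Ω x₀ < Ω xm < 0, 1 + Ω xm h xm² < 0 : contradiction
      have hsq : h xm ^ 2 < h x₀ ^ 2 := by nlinarith
      have hpos : (0:ℝ) < h xm ^ 2 := by nlinarith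
      have c1 : Ω x₀ * h x₀ ^ 2 < Ω x₀ * h xm ^ 2 :=
        mul_lt_mul_of_neg_left hsq (hΩ x₀ hx₀J)
      have c2 : Ω x₀ * h xm ^ 2 < Ω xm * h xm ^ 2 :=
        mul_lt_mul_of_pos_right hΩlt hpos
      linarith [hΩ₀, hgm']
    · -- Case B : h x₀ > 0, Gronwall-type argument
      have hc : (0:ℝ) < h x₀ := hcaseB
      have hmc : h x₀ < h xm := hanti hmemm hmem₀ hxmx₀
      set M : ℝ := (h xm + h x₀) / h x₀ ^ 2 with hMdef
      set F : ℝ → ℝ := fun t => (h t - h x₀) * Real.exp (M * t) with hFdef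
      have hFderiv : ∀ t ∈ J, HasDerivAt F
          ((1 + Ω t * h t ^ 2) * Real.exp (M * t) + (h t - h x₀) * (Real.exp (M * t) * M)) t := by
        intro t ht
        have h1 : HasDerivAt (fun s => h s - h x₀) (1 + Ω t * h t ^ 2) t := (hh t ht).sub_const _
        have h2 : HasDerivAt (fun s => Real.exp (M * s)) (Real.exp (M * t) * M) t := by
          simpa using ((hasDerivAt_id t).const_mul M).exp
        exact h1.mul h2
      have hFc : ContinuousOn F (Set.Icc xm x₀) :=
        ((hhc.mono hIcoJ).sub continuousOn_const).mul
          ((Real.continuous_exp.comp (continuous_const.mul continuous_id)).continuousOn)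
      have hFmono : MonotoneOn F (Set.Icc xm x₀) := by
        apply monotoneOn_of_deriv_nonneg (convex_Icc _ _) hFc
        · intro t ht
          rw [interior_Icc] at ht
          exact ((hFderiv t (hIcoJ ⟨ht.1.le, ht.2.le⟩)).differentiableAt).differentiableWithinAt
        · intro t ht
          rw [interior_Icc] at ht
          have htJ : t ∈ J := hIcoJ ⟨ht.1.le, ht.2.le⟩
          rw [(hFderiv t htJ).deriv]
          have he : 0 < Real.exp (M * t) := Real.exp_pos _
          have h1 : Ω x₀ < Ω t := hΩdec htJ hx₀J ht.2
          have h2 : h x₀ < h t := hanti ⟨ht.1.le, ht.2.le⟩ hmem₀ ht.2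
          have h3 : h t < h xm := hanti hmemm ⟨ht.1.le, ht.2.le⟩ ht.1
          have hc2 : (0:ℝ) < h x₀ ^ 2 := by positivity
          have hM : M * h x₀ ^ 2 = h xm + h x₀ := div_mul_cancel₀ _ hc2.ne'
          have key1 : Ω x₀ * h t ^ 2 ≤ Ω t * h t ^ 2 :=
            mul_le_mul_of_nonneg_right h1.le (sq_nonneg (h t))
          have key2 : 0 ≤ (h t - h x₀) * (h xm - h t) :=
            mul_nonneg (by linarith) (by linarith)
          have e1 : Ω x₀ * h t ^ 2 * h x₀ ^ 2 = -(h t ^ 2) := by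
            calc Ω x₀ * h t ^ 2 * h x₀ ^ 2 = (Ω x₀ * h x₀ ^ 2) * h t ^ 2 := by ring
              _ = -(h t ^ 2) := by rw [hΩ₀]; ring
          have e2 : (h t - h x₀) * (M * h x₀ ^ 2) = (h t - h x₀) * (h xm + h x₀) := by
            rw [hM]
          have goal2 : 0 ≤ ((1 + Ω t * h t ^ 2) + (h t - h x₀) * M) * h x₀ ^ 2 := by
            nlinarith [mul_le_mul_of_nonneg_right key1 hc2.le]
          have hinner : 0 ≤ (1 + Ω t * h t ^ 2) + (h t - h x₀) * M := by
            nlinarith [goal2]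
          nlinarith [mul_nonneg hinner he.le]
      have hF0 : F x₀ = 0 := by
        show (h x₀ - h x₀) * Real.exp (M * x₀) = 0
        simp
      have hFm : 0 < F xm := mul_pos (by linarith) (Real.exp_pos _)
      have hle := hFmono hmemm hmem₀ hxmx₀.le
      rw [hF0] at hle
      linarith
  have hgx : g x < 0 := key x ⟨hxx.le, le_refl x⟩
  have hgx' : 1 + Ω x * h x ^ 2 < 0 := hgx
  refine ⟨by rw [(hh x hx).deriv]; exact hgx', ?_⟩
  intro h0
  rw [h0] at hgx'
  norm_num at hgx'
end

section
/- Let f be C³ on an interval J with f' ≠ 0 and f''' continuous, let α ∈ J with f(α) = 0, and suppose the Schwarzian derivative {f,x} < 0 on J. Then Φ = f/√|f'| is strictly monotonic on J and Φ(x)·Φ''(x) > 0 for all x ∈ J \ {α}. -/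
/-- The Schwarzian derivative `{f,x} = f'''/f' - (3/2)(f''/f')²`. -/
noncomputable def schwarzian (f : ℝ → ℝ) (x : ℝ) : ℝ :=
  deriv (deriv (deriv f)) x / deriv f x - (3/2) * (deriv (deriv f) x / deriv f x) ^ 2

/-!
By Darboux's theorem `f'` has constant sign on `J`; since `f ↦ -f` negates `Φ` and leaves the
Schwarzian unchanged, we may assume `f' > 0`, so that `Φ = f / √f'`. A direct computation gives
`Φ'' = -(1/2) {f,x} Φ`. As `f` increases through its zero `α`, `Φ` has the sign of `x - α`, hence
`Φ Φ'' = -(1/2) {f,x} Φ² > 0` off `α`, and `Φ''` has the sign of `x - α`. So `Φ'` is smallest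
at `α`, where it equals `√(f' α) > 0`, and `Φ` is strictly increasing.
-/

open Set

theorem schwarzian_neg (f : ℝ → ℝ) : schwarzian (fun x => -f x) = schwarzian f := by
  ext x
  simp only [schwarzian, deriv.fun_neg', neg_div_neg_eq]

section DivSqrtDeriv

variable {f Φ : ℝ → ℝ} {U : Set ℝ}

theorem hasDerivAt_div_sqrt_deriv {x : ℝ} (hf : DifferentiableAt ℝ f x)
    (hf' : DifferentiableAt ℝ (deriv f) x) (hpos : 0 < deriv f x) :
    HasDerivAt (fun y => f y / √(deriv f y))
      (√(deriv f x) - f x * deriv (deriv f) x / (2 * √(deriv f x) ^ 3)) x := by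
  have hu := hf'.hasDerivAt.sqrt hpos.ne'
  have hu0 := (Real.sqrt_pos.2 hpos).ne'
  refine (hf.hasDerivAt.div hu hu0).congr_deriv ?_
  have hsq := Real.sq_sqrt hpos.le
  set u := √(deriv f x)
  rw [← hsq]
  field_simp

theorem hasDerivAt_of_eqOn_div_sqrt_deriv (hU : IsOpen U) (hf : ContDiffOn ℝ 3 f U)
    (hpos : ∀ x ∈ U, 0 < deriv f x) (hΦ : EqOn Φ (fun y => f y / √(deriv f y)) U)
    {x : ℝ} (hx : x ∈ U) :
    HasDerivAt Φ (√(deriv f x) - f x * deriv (deriv f) x / (2 * √(deriv f x) ^ 3)) x := by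
  have hf' : ContDiffOn ℝ 2 (deriv f) U := hf.deriv_of_isOpen hU (by norm_num)
  refine (hasDerivAt_div_sqrt_deriv ((hf.contDiffAt (hU.mem_nhds hx)).differentiableAt
    (by norm_num)) ((hf'.contDiffAt (hU.mem_nhds hx)).differentiableAt (by norm_num))
    (hpos x hx)).congr_of_eventuallyEq ?_
  filter_upwards [hU.mem_nhds hx] with y hy using hΦ hy

theorem hasDerivAt_deriv_of_eqOn_div_sqrt_deriv (hU : IsOpen U) (hf : ContDiffOn ℝ 3 f U)
    (hpos : ∀ x ∈ U, 0 < deriv f x) (hΦ : EqOn Φ (fun y => f y / √(deriv f y)) U)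
    {x : ℝ} (hx : x ∈ U) :
    HasDerivAt (deriv Φ) (-(1 / 2) * schwarzian f x * Φ x) x := by
  have hf' : ContDiffOn ℝ 2 (deriv f) U := hf.deriv_of_isOpen hU (by norm_num)
  have hf'' : ContDiffOn ℝ 1 (deriv (deriv f)) U := hf'.deriv_of_isOpen hU (by norm_num)
  have hd := ((hf.contDiffAt (hU.mem_nhds hx)).differentiableAt (by norm_num)).hasDerivAt
  have hd' := ((hf'.contDiffAt (hU.mem_nhds hx)).differentiableAt (by norm_num)).hasDerivAt
  have hd'' := ((hf''.contDiffAt (hU.mem_nhds hx)).differentiableAt (by norm_num)).hasDerivAt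
  have hu := hd'.sqrt (hpos x hx).ne'
  have hu0 := (Real.sqrt_pos.2 (hpos x hx)).ne'
  have hD := hu.sub ((hd.mul hd'').div ((hu.pow 3).const_mul 2) (by simp [hu0]))
  simp only [Pi.pow_apply, Pi.mul_apply] at hD
  have hsq := Real.sq_sqrt (hpos x hx).le
  refine (hD.congr_deriv ?_).congr_of_eventuallyEq ?_
  · simp only [hΦ hx, schwarzian]
    set u := √(deriv f x)
    rw [← hsq]
    field_simp
    ring
  · filter_upwards [hU.mem_nhds hx] with y hy
    exact (hasDerivAt_of_eqOn_div_sqrt_deriv hU hf hpos hΦ hy).deriv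

end DivSqrtDeriv

theorem isMinOn_of_hasDerivAt_of_sub_mul_nonneg {g g' : ℝ → ℝ} {J : Set ℝ} {a : ℝ}
    (hJ : Convex ℝ J) (ha : a ∈ J) (hg : ∀ x ∈ J, HasDerivAt g (g' x) x)
    (hsign : ∀ x ∈ J, 0 ≤ (x - a) * g' x) : IsMinOn g J a := by
  intro x hx
  have hderiv {s : Set ℝ} (hs : s ⊆ J) :
      ∀ y ∈ interior s, HasDerivWithinAt g (g' y) (interior s) y :=
    fun y hy => (hg y (hs (interior_subset hy))).hasDerivWithinAt
  have hcont {s : Set ℝ} (hs : s ⊆ J) : ContinuousOn g s :=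
    fun y hy => (hg y (hs hy)).continuousAt.continuousWithinAt
  rcases le_total a x with hax | hxa
  · have hs := hJ.ordConnected.out ha hx
    refine monotoneOn_of_hasDerivWithinAt_nonneg (convex_Icc a x) (hcont hs) (hderiv hs)
      (fun y hy => ?_) (left_mem_Icc.2 hax) (right_mem_Icc.2 hax) hax
    rw [interior_Icc] at hy
    exact nonneg_of_mul_nonneg_right (hsign y (hs (Ioo_subset_Icc_self hy))) (sub_pos.2 hy.1)
  · have hs := hJ.ordConnected.out hx ha
    refine antitoneOn_of_hasDerivWithinAt_nonpos (convex_Icc x a) (hcont hs) (hderiv hs)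
      (fun y hy => ?_) (left_mem_Icc.2 hxa) (right_mem_Icc.2 hxa) hxa
    rw [interior_Icc] at hy
    exact nonpos_of_mul_nonneg_right (hsign y (hs (Ioo_subset_Icc_self hy))) (sub_neg.2 hy.2)

theorem strictMonoOn_and_mul_deriv_deriv_pos_of_deriv_pos {f Φ : ℝ → ℝ} {J : Set ℝ}
    (hJ : IsOpen J) (hJc : Convex ℝ J) (hf : ContDiffOn ℝ 3 f J)
    (hpos : ∀ x ∈ J, 0 < deriv f x) {α : ℝ} (hα : α ∈ J) (hfα : f α = 0)
    (hS : ∀ x ∈ J, schwarzian f x < 0) (hΦ : EqOn Φ (fun y => f y / √(deriv f y)) J) :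
    StrictMonoOn Φ J ∧ ∀ x ∈ J, x ≠ α → 0 < Φ x * deriv (deriv Φ) x := by
  have hΦ' := fun x (hx : x ∈ J) => hasDerivAt_of_eqOn_div_sqrt_deriv hJ hf hpos hΦ hx
  have hΦ'' := fun x (hx : x ∈ J) => hasDerivAt_deriv_of_eqOn_div_sqrt_deriv hJ hf hpos hΦ hx
  have hsign : ∀ x ∈ J, x ≠ α → 0 < (x - α) * Φ x := by
    have hmono : StrictMonoOn f J :=
      strictMonoOn_of_deriv_pos hJc hf.continuousOn (by rwa [hJ.interior_eq])
    intro x hx hxα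
    rw [hΦ hx, ← mul_div_assoc]
    refine div_pos ?_ (Real.sqrt_pos.2 (hpos x hx))
    rcases hxα.lt_or_gt with h | h
    · exact mul_pos_of_neg_of_neg (sub_neg.2 h) (hfα ▸ hmono hx hα h)
    · exact mul_pos (sub_pos.2 h) (hfα ▸ hmono hα hx h)
  have hmin : IsMinOn (deriv Φ) J α := by
    refine isMinOn_of_hasDerivAt_of_sub_mul_nonneg hJc hα hΦ'' fun x hx => ?_
    rcases eq_or_ne x α with rfl | hxα
    · simp
    · have := hsign x hx hxα
      nlinarith [hS x hx]
  have hderiv_pos : ∀ x ∈ J, 0 < deriv Φ x := fun x hx =>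
    calc 0 < √(deriv f α) := Real.sqrt_pos.2 (hpos α hα)
      _ = deriv Φ α := by simp [(hΦ' α hα).deriv, hfα]
      _ ≤ deriv Φ x := hmin hx
  refine ⟨strictMonoOn_of_deriv_pos hJc (fun x hx => (hΦ' x hx).continuousAt.continuousWithinAt)
    (by rwa [hJ.interior_eq]), fun x hx hxα => ?_⟩
  have hΦx : Φ x ≠ 0 := right_ne_zero_of_mul (hsign x hx hxα).ne'
  rw [(hΦ'' x hx).deriv, show Φ x * (-(1 / 2) * schwarzian f x * Φ x)
    = -(1 / 2) * schwarzian f x * Φ x ^ 2 by ring]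
  exact mul_pos (by linarith [hS x hx]) (by positivity)

/-- If `f` is `C³` on an open interval `J` with `f' ≠ 0`, `f(α) = 0` for some `α ∈ J`,
and `{f,x} < 0` on `J`, then `Φ = f/√|f'|` is strictly monotonic on `J` and
`Φ(x)·Φ''(x) > 0` for all `x ∈ J \ {α}`. -/
theorem stmt6 (f : ℝ → ℝ) (J : Set ℝ) (hJ : IsOpen J) (hJc : Convex ℝ J)
    (hf : ∀ x ∈ J, ContDiffAt ℝ 3 f x)
    (hf' : ∀ x ∈ J, deriv f x ≠ 0)
    (α : ℝ) (hα : α ∈ J) (hfα : f α = 0)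
    (hS : ∀ x ∈ J, schwarzian f x < 0)
    (Φ : ℝ → ℝ) (hΦ : ∀ x ∈ J, Φ x = f x / Real.sqrt |deriv f x|) :
    (StrictMonoOn Φ J ∨ StrictAntiOn Φ J) ∧
      ∀ x ∈ J, x ≠ α → 0 < Φ x * deriv (deriv Φ) x := by
  have hfJ : ContDiffOn ℝ 3 f J := fun x hx => (hf x hx).contDiffWithinAt
  have hfd : ∀ x ∈ J, HasDerivWithinAt f (deriv f x) J x := fun x hx =>
    ((hf x hx).differentiableAt (by norm_num)).hasDerivAt.hasDerivWithinAt
  rcases hasDerivWithinAt_forall_lt_or_forall_gt_of_forall_ne hJc hfd hf' with hneg | hpos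
  · obtain ⟨hmono, hconv⟩ := strictMonoOn_and_mul_deriv_deriv_pos_of_deriv_pos hJ hJc hfJ.neg
      (by simpa [deriv.fun_neg] using hneg) hα (by simp [hfα]) (by simpa [schwarzian_neg])
      (Φ := fun x => -Φ x) fun x hx => by
        simp [hΦ x hx, abs_of_neg (hneg x hx), deriv.fun_neg, neg_div]
    exact ⟨Or.inr (by simpa using hmono.neg), fun x hx hxα => by
      simpa [deriv.fun_neg'] using hconv x hx hxα⟩
  · obtain ⟨hmono, hconv⟩ := strictMonoOn_and_mul_deriv_deriv_pos_of_deriv_pos hJ hJc hfJ hpos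
      hα hfα hS (Φ := Φ) fun x hx => by simp [hΦ x hx, abs_of_pos (hpos x hx)]
    exact ⟨Or.inl hmono, hconv⟩
end

section
/- The Schwarzian-Newton method is exact for functions of constant Schwarzian derivative: if {f,x} = 2λ is constant on an interval J containing a zero α of f, with f' ≠ 0 on J, then for every x in a neighborhood of α, g(x) = α, where g(x) = x - arctan(λ, h(x)), h = f/(f' - f''f/(2f')). -/
/-- The inverse hyperbolic tangent. -/
noncomputable def artanh (x : ℝ) : ℝ := (1/2) * Real.log ((1 + x) / (1 - x))

/-- The generalized arctangent: `arctan(λ,y) = arctan(√λ y)/√λ` for `λ > 0`, `y` for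
`λ = 0`, and `arctanh(√(-λ) y)/√(-λ)` for `λ < 0`. -/
noncomputable def arctanGen (lam y : ℝ) : ℝ :=
  if 0 < lam then Real.arctan (Real.sqrt lam * y) / Real.sqrt lam
  else if lam < 0 then artanh (Real.sqrt (-lam) * y) / Real.sqrt (-lam)
  else y

lemma hasDerivAt_artanh {y : ℝ} (hy : y ^ 2 < 1) :
    HasDerivAt artanh (1 / (1 - y ^ 2)) y := by
  have hlt : 0 < 1 - y := by nlinarith
  have hgt : 0 < 1 + y := by nlinarith
  have hsq : 1 - y ^ 2 ≠ 0 := by linarith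
  have H : HasDerivAt (fun x => (1 + x) / (1 - x))
      ((1 * (1 - y) - (1 + y) * (-1)) / (1 - y) ^ 2) y :=
    ((hasDerivAt_id' y).const_add 1).div ((hasDerivAt_id' y).const_sub 1) hlt.ne'
  refine ((H.log (div_pos hgt hlt).ne').const_mul (1 / 2)).congr_deriv ?_
  field_simp
  ring

lemma arctanGen_zero (lam : ℝ) : arctanGen lam 0 = 0 := by
  unfold arctanGen artanh
  split_ifs <;> simp

lemma hasDerivAt_arctanGen (lam : ℝ) {y : ℝ} (hy : 0 < 1 + lam * y ^ 2) :
    HasDerivAt (arctanGen lam) (1 / (1 + lam * y ^ 2)) y := by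
  rcases lt_trichotomy lam 0 with hlam | rfl | hlam
  · have hs : √(-lam) ^ 2 = -lam := Real.sq_sqrt (by linarith)
    have hs₀ : √(-lam) ≠ 0 := (Real.sqrt_pos.2 (neg_pos.2 hlam)).ne'
    have hy' : (√(-lam) * y) ^ 2 < 1 := by rw [mul_pow, hs]; linarith
    have hfun : arctanGen lam = fun z => artanh (√(-lam) * z) / √(-lam) := by
      ext z
      simp [arctanGen, hlam, hlam.not_gt]
    rw [hfun]
    refine (((hasDerivAt_artanh hy').comp y ((hasDerivAt_id' y).const_mul _)).div_const
      _).congr_deriv ?_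
    rw [mul_pow, hs, neg_mul, sub_neg_eq_add]
    field_simp
  · have hfun : arctanGen 0 = id := by
      ext z
      simp [arctanGen]
    simpa [hfun] using hasDerivAt_id y
  · have hs : √lam ^ 2 = lam := Real.sq_sqrt hlam.le
    have hs₀ : √lam ≠ 0 := (Real.sqrt_pos.2 hlam).ne'
    have hfun : arctanGen lam = fun z => Real.arctan (√lam * z) / √lam := by
      ext z
      simp [arctanGen, hlam]
    rw [hfun]
    refine (((Real.hasDerivAt_arctan _).comp y ((hasDerivAt_id' y).const_mul _)).div_const
      _).congr_deriv ?_
    rw [mul_pow, hs]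
    field_simp

lemma HasDerivAt.arctanGen_of_riccati {u : ℝ → ℝ} {x lam : ℝ}
    (hu : HasDerivAt u (1 + lam * u x ^ 2) x) (hpos : 0 < 1 + lam * u x ^ 2) :
    HasDerivAt (fun y => arctanGen lam (u y)) 1 x :=
  ((hasDerivAt_arctanGen lam hpos).comp x hu).congr_deriv (one_div_mul_cancel hpos.ne')

lemma eventually_eq_of_eventually_hasDerivAt_zero {𝕜 F : Type*} [RCLike 𝕜]
    [NormedAddCommGroup F] [NormedSpace 𝕜 F] {g : 𝕜 → F} {a : 𝕜}
    (hg : ∀ᶠ x in nhds a, HasDerivAt g 0 x) : ∀ᶠ x in nhds a, g x = g a := by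
  obtain ⟨ε, hε, hball⟩ := Metric.eventually_nhds_iff_ball.mp hg
  filter_upwards [Metric.ball_mem_nhds a hε] with x hx
  exact Metric.isOpen_ball.is_const_of_deriv_eq_zero (convex_ball a ε).isPreconnected
    (fun y hy => (hball y hy).differentiableAt.differentiableWithinAt)
    (fun y hy => (hball y hy).deriv) hx (Metric.mem_ball_self hε)

noncomputable def halleyCorrection (f : ℝ → ℝ) (x : ℝ) : ℝ :=
  2 * f x * deriv f x / (2 * deriv f x ^ 2 - deriv (deriv f) x * f x)

-- Both sides vanish when `f' x = 0`, because division by zero gives `0`.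
lemma halleyCorrection_eq (f : ℝ → ℝ) (x : ℝ) :
    f x / (deriv f x - deriv (deriv f) x * f x / (2 * deriv f x)) = halleyCorrection f x := by
  unfold halleyCorrection
  rcases eq_or_ne (deriv f x) 0 with h0 | h0
  · simp [h0]
  · have hD : deriv f x - deriv (deriv f) x * f x / (2 * deriv f x)
        = (2 * deriv f x ^ 2 - deriv (deriv f) x * f x) / (2 * deriv f x) := by
      field_simp
    rw [hD, div_div_eq_mul_div]
    ring

theorem hasDerivAt_halleyCorrection {f : ℝ → ℝ} {x lam : ℝ} (hf : ContDiffAt ℝ 3 f x)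
    (hf' : deriv f x ≠ 0) (hS : schwarzian f x = 2 * lam)
    (hD : 2 * deriv f x ^ 2 - deriv (deriv f) x * f x ≠ 0) :
    HasDerivAt (halleyCorrection f) (1 + lam * halleyCorrection f x ^ 2) x := by
  have hf₁ : ContDiffAt ℝ 2 (deriv f) x := hf.derivWithin (by norm_num)
  have hf₂ : ContDiffAt ℝ 1 (deriv (deriv f)) x := hf₁.derivWithin (by norm_num)
  have d₀ := (hf.differentiableAt (by norm_num)).hasDerivAt
  have d₁ := (hf₁.differentiableAt (by norm_num)).hasDerivAt
  have d₂ := (hf₂.differentiableAt (by norm_num)).hasDerivAt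
  have hd : deriv (deriv (deriv f)) x * deriv f x
      = 2 * lam * deriv f x ^ 2 + 3 / 2 * deriv (deriv f) x ^ 2 := by
    unfold schwarzian at hS
    field_simp at hS
    linear_combination hS / 2
  set a := f x
  set b := deriv f x
  set c := deriv (deriv f) x
  set d := deriv (deriv (deriv f)) x
  have hN : HasDerivAt (fun y => 2 * f y * deriv f y) (2 * b * b + 2 * a * c) x :=
    (d₀.const_mul 2).mul d₁
  have hD' : HasDerivAt (fun y => 2 * deriv f y ^ 2 - deriv (deriv f) y * f y)
      (4 * b * c - (d * a + c * b)) x :=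
    (((d₁.pow 2).const_mul 2).sub (d₂.mul d₀)).congr_deriv (by ring)
  refine (hN.div hD' hD).congr_deriv ?_
  unfold halleyCorrection
  rw [div_pow, mul_div_assoc', one_add_div (pow_ne_zero 2 hD), div_left_inj' (pow_ne_zero 2 hD)]
  linear_combination 2 * a ^ 2 * hd

theorem stmt9_general (f : ℝ → ℝ) (J : Set ℝ) (hJ : IsOpen J)
    (hf : ∀ x ∈ J, ContDiffAt ℝ 3 f x)
    (hf' : ∀ x ∈ J, deriv f x ≠ 0)
    (lam : ℝ) (hS : ∀ x ∈ J, schwarzian f x = 2 * lam)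
    (α : ℝ) (hα : α ∈ J) (hfα : f α = 0)
    (h g : ℝ → ℝ)
    (hh : ∀ x, h x = f x / (deriv f x - deriv (deriv f) x * f x / (2 * deriv f x)))
    (hg : ∀ x, g x = x - arctanGen lam (h x)) :
    ∃ U ∈ nhds α, ∀ x ∈ U, g x = α := by
  obtain rfl : h = halleyCorrection f := funext fun x => (hh x).trans (halleyCorrection_eq f x)
  have hden : ∀ᶠ x in nhds α, 2 * deriv f x ^ 2 - deriv (deriv f) x * f x ≠ 0 := by
    have hf₁ : ContDiffAt ℝ 2 (deriv f) α := (hf α hα).derivWithin (by norm_num)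
    have hf₂ : ContDiffAt ℝ 1 (deriv (deriv f)) α := hf₁.derivWithin (by norm_num)
    refine ContinuousAt.eventually_ne ?_ (by simpa [hfα] using hf' α hα)
    exact (continuousAt_const.mul (hf₁.continuousAt.pow 2)).sub
      (hf₂.continuousAt.mul (hf α hα).continuousAt)
  have hriccati : ∀ᶠ x in nhds α,
      HasDerivAt (halleyCorrection f) (1 + lam * halleyCorrection f x ^ 2) x := by
    filter_upwards [hJ.mem_nhds hα, hden] with x hxJ hx
    exact hasDerivAt_halleyCorrection (hf x hxJ) (hf' x hxJ) (hS x hxJ) hx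
  have hzero : halleyCorrection f α = 0 := by simp [halleyCorrection, hfα]
  have hpos : ∀ᶠ x in nhds α, 0 < 1 + lam * halleyCorrection f x ^ 2 :=
    continuousAt_const.eventually_lt (continuousAt_const.add (continuousAt_const.mul
      (hriccati.self_of_nhds.continuousAt.pow 2))) (by simp [hzero])
  have hg' : ∀ᶠ x in nhds α, HasDerivAt g 0 x := by
    filter_upwards [hriccati, hpos] with x hx hxpos
    rw [funext hg, ← sub_self 1]
    exact (hasDerivAt_id' x).sub (hx.arctanGen_of_riccati hxpos)
  refine ⟨_, eventually_eq_of_eventually_hasDerivAt_zero hg', fun x (hx : g x = g α) => ?_⟩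
  rw [hx, hg, hzero, arctanGen_zero, sub_zero]

/-- The Schwarzian-Newton method is exact for functions of constant Schwarzian
derivative: if `{f,x} = 2λ` on an open interval `J` containing a zero `α` of `f`, with
`f' ≠ 0` on `J` and `f` sufficiently smooth, then `g(x) = α` for every `x` in a
neighborhood of `α`, where `g(x) = x - arctan(λ, h(x))`, `h = f/(f' - f''f/(2f'))`. -/
theorem stmt9 (f : ℝ → ℝ) (J : Set ℝ) (hJ : IsOpen J) (hJc : Convex ℝ J)
    (hf : ∀ x ∈ J, ContDiffAt ℝ 3 f x)
    (hf' : ∀ x ∈ J, deriv f x ≠ 0)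
    (lam : ℝ) (hS : ∀ x ∈ J, schwarzian f x = 2 * lam)
    (α : ℝ) (hα : α ∈ J) (hfα : f α = 0)
    (h g : ℝ → ℝ)
    (hh : ∀ x, h x = f x / (deriv f x - deriv (deriv f) x * f x / (2 * deriv f x)))
    (hg : ∀ x, g x = x - arctanGen lam (h x)) :
    ∃ U ∈ nhds α, ∀ x ∈ U, g x = α :=
  stmt9_general f J hJ hf hf' lam hS α hα hfα h g hh hg
end

section
/- For α > 0, β > 0, the cubic Q(x) = (α+β)(α+β+2)x³ - 3(α² + αβ + 2α)x² + (3α² + αβ + 6α)x - α(α+2) has exactly one real root; equivalently, its derivative Q'(x) has no real roots. -/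
/-- For `α > 0`, `β > 0`, the cubic
`Q(x) = (α+β)(α+β+2)x³ - 3(α² + αβ + 2α)x² + (3α² + αβ + 6α)x - α(α+2)` has exactly one
real root; equivalently, its derivative `Q'(x) = 3(α+β)(α+β+2)x² - 6(α² + αβ + 2α)x +
(3α² + αβ + 6α)` has no real roots. -/
theorem stmt14 (α β : ℝ) (hα : 0 < α) (hβ : 0 < β)
    (Q : ℝ → ℝ)
    (hQ : ∀ x, Q x = (α + β) * (α + β + 2) * x ^ 3 - 3 * (α ^ 2 + α * β + 2 * α) * x ^ 2
      + (3 * α ^ 2 + α * β + 6 * α) * x - α * (α + 2)) :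
    (∃! x : ℝ, Q x = 0) ∧
    (∀ x : ℝ, 3 * (α + β) * (α + β + 2) * x ^ 2 - 6 * (α ^ 2 + α * β + 2 * α) * x
      + (3 * α ^ 2 + α * β + 6 * α) ≠ 0) := by
  set A : ℝ := (α + β) * (α + β + 2) with hA
  set B : ℝ := α ^ 2 + α * β + 2 * α with hB
  set C : ℝ := 3 * α ^ 2 + α * β + 6 * α with hC
  have hdisc : 3 * B ^ 2 < A * C := by
    rw [hA, hB, hC]; nlinarith [sq_nonneg α, sq_nonneg β, mul_pos hα hβ, sq_nonneg (α+β)]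
  have hApos : 0 < A := by rw [hA]; positivity
  have hquad : ∀ x : ℝ, 0 < 3 * A * x ^ 2 - 6 * B * x + C := by
    intro x
    nlinarith [sq_nonneg (3 * A * x - 3 * B), hApos, hdisc]
  have hmono : StrictMono Q := by
    intro x y hxy
    have hfac : 0 < A * (x ^ 2 + x * y + y ^ 2) - 3 * B * (x + y) + C := by
      nlinarith [sq_nonneg (A * x - A * y), sq_nonneg (A * (x + y) - 2 * B), hApos, hdisc]
    have : Q y - Q x = (y - x) * (A * (x ^ 2 + x * y + y ^ 2) - 3 * B * (x + y) + C) := by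
      rw [hQ x, hQ y]; ring
    nlinarith [mul_pos (sub_pos.mpr hxy) hfac]
  have hcont : Continuous Q := by
    have : Q = fun x => A * x ^ 3 - 3 * B * x ^ 2 + C * x - α * (α + 2) := by
      funext x; rw [hQ x]
    rw [this]; continuity
  have hQ0 : Q 0 < 0 := by rw [hQ 0]; nlinarith
  have hQ1 : 0 < Q 1 := by rw [hQ 1]; nlinarith [sq_nonneg α, sq_nonneg β]
  obtain ⟨c, hc01, hc⟩ :=
    intermediate_value_Icc (by norm_num : (0:ℝ) ≤ 1) hcont.continuousOn ⟨hQ0.le, hQ1.le⟩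
  constructor
  · exact ⟨c, hc, fun y hy => hmono.injective (hy.trans hc.symm)⟩
  · intro x
    have h := hquad x
    have e : 3 * A * x ^ 2 - 6 * B * x + C
        = 3 * (α + β) * (α + β + 2) * x ^ 2 - 6 * B * x + C := by rw [hA]; ring
    intro hcon
    rw [e, hcon] at h
    exact lt_irrefl 0 h
end

section
/- For the beta distribution in the variable z = log(x/(1-x)), the function Ω(z) = (1/4)(-(a+b)(a+b-2)x² + 2(a+b)(a-1)x - a²) with x = x(z) ∈ (0,1) is negative for all x ∈ [0,1] when a > 0 and b > 0. -/
/-- For the beta distribution in the variable `z = log(x/(1-x))`, the function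
`Ω(z) = (1/4)(-(a+b)(a+b-2)x² + 2(a+b)(a-1)x - a²)`, where `x = x(z) = e^z/(1+e^z)`,
is negative for all `x ∈ [0,1]` when `a > 0` and `b > 0`. -/
theorem stmt15 (a b : ℝ) (ha : 0 < a) (hb : 0 < b) :
    ∀ x ∈ Set.Icc (0 : ℝ) 1,
      (1/4) * (-(a + b) * (a + b - 2) * x ^ 2 + 2 * (a + b) * (a - 1) * x - a ^ 2) < 0 := by
  rintro x ⟨hx0, hx1⟩
  rcases eq_or_lt_of_le hx0 with h | h
  · subst h; nlinarith [mul_pos ha ha]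
  · rcases eq_or_lt_of_le hx1 with h1 | h1
    · subst h1; nlinarith [mul_pos hb hb]
    · nlinarith [sq_nonneg ((a+b)*x - a), mul_pos (mul_pos (add_pos ha hb) h) (sub_pos.mpr h1)]
end

section
/- For the incomplete elliptic integral of the second kind, Ω(x) = (m²/4)·(m²cos⁴x + (m²-4)cos²x + 2(1-m²))/(1 - m²sin²x)² changes sign exactly once on (0, π/2) for 0 < m < 1: Ω(x) < 0 for x < x_c(m) and Ω(x) > 0 for x > x_c(m), where cos²x_c(m) = (4 - m² - √(9m⁴ + 16(1-m²)))/(2m²). -/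
/-- For the incomplete elliptic integral of the second kind, the function
`Ω(x) = (m²/4)(m²cos⁴x + (m²-4)cos²x + 2(1-m²))/(1 - m²sin²x)²` changes sign exactly
once on `(0, π/2)` for `0 < m < 1`: there is `x_c = x_c(m) ∈ (0, π/2)` with
`cos²x_c = (4 - m² - √(9m⁴ + 16(1-m²)))/(2m²)` such that `Ω(x) < 0` for `x < x_c` and
`Ω(x) > 0` for `x > x_c`. -/
theorem stmt16 (m : ℝ) (hm0 : 0 < m) (hm1 : m < 1)
    (Ω : ℝ → ℝ)
    (hΩ : ∀ x, Ω x = (m ^ 2 / 4) *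
      (m ^ 2 * Real.cos x ^ 4 + (m ^ 2 - 4) * Real.cos x ^ 2 + 2 * (1 - m ^ 2)) /
      (1 - m ^ 2 * Real.sin x ^ 2) ^ 2) :
    ∃ xc ∈ Set.Ioo 0 (Real.pi / 2),
      Real.cos xc ^ 2 = (4 - m ^ 2 - Real.sqrt (9 * m ^ 4 + 16 * (1 - m ^ 2))) / (2 * m ^ 2) ∧
      ∀ x ∈ Set.Ioo 0 (Real.pi / 2), (x < xc → Ω x < 0) ∧ (xc < x → 0 < Ω x) := by
  have hm2 : (0:ℝ) < m ^ 2 := by positivity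
  have hm2' : m ^ 2 < 1 := by nlinarith
  have hDpos : (0:ℝ) < 9 * m ^ 4 + 16 * (1 - m ^ 2) := by nlinarith
  have h4 : (0:ℝ) < 4 - m ^ 2 := by linarith
  obtain ⟨s, hs_eq⟩ : ∃ s, Real.sqrt (9 * m ^ 4 + 16 * (1 - m ^ 2)) = s := ⟨_, rfl⟩
  have hs2 : s ^ 2 = 9 * m ^ 4 + 16 * (1 - m ^ 2) := by
    rw [← hs_eq]; exact Real.sq_sqrt hDpos.le
  have hspos : 0 < s := hs_eq ▸ Real.sqrt_pos.mpr hDpos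
  have hsl : s < 4 - m ^ 2 := by
    rw [← hs_eq]; exact (Real.sqrt_lt' h4).mpr (by nlinarith)
  have hsg : 4 - 3 * m ^ 2 < s := by
    rw [← hs_eq]
    exact (Real.lt_sqrt (by nlinarith)).mpr (by nlinarith)
  obtain ⟨c, hc_eq⟩ : ∃ c, (4 - m ^ 2 - s) / (2 * m ^ 2) = c := ⟨_, rfl⟩
  have ha : 2 * m ^ 2 * c = 4 - m ^ 2 - s := by rw [← hc_eq]; field_simp
  have hc0 : 0 < c := by
    rw [← hc_eq]; exact div_pos (by linarith) (by positivity)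
  have hc1 : c < 1 := by
    rw [← hc_eq, div_lt_one (by positivity)]; linarith
  have hsc0 : 0 < Real.sqrt c := Real.sqrt_pos.mpr hc0
  have hsc1 : Real.sqrt c < 1 := (Real.sqrt_lt' one_pos).mpr (by nlinarith)
  have hpi : (0:ℝ) < Real.pi := Real.pi_pos
  -- sign of the quadratic numerator
  have keyneg : ∀ u : ℝ, c < u → u ≤ 1 →
      m ^ 2 * u ^ 2 + (m ^ 2 - 4) * u + 2 * (1 - m ^ 2) < 0 := by
    intro u h h'
    have hmul : 2 * m ^ 2 * c < 2 * m ^ 2 * u :=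
      mul_lt_mul_of_pos_left h (by positivity)
    have h1 : 0 < 2 * m ^ 2 * u - (4 - m ^ 2) + s := by linarith [ha]
    have h2 : 0 < 4 - m ^ 2 + s - 2 * m ^ 2 * u := by
      nlinarith [mul_nonneg hm2.le (sub_nonneg.mpr h')]
    nlinarith [mul_pos h1 h2, hs2, hm2]
  have keypos : ∀ u : ℝ, u < c →
      0 < m ^ 2 * u ^ 2 + (m ^ 2 - 4) * u + 2 * (1 - m ^ 2) := by
    intro u h
    have hmul : 2 * m ^ 2 * u < 2 * m ^ 2 * c :=
      mul_lt_mul_of_pos_left h (by positivity)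
    have h1 : 0 < 4 - m ^ 2 - s - 2 * m ^ 2 * u := by linarith [ha]
    have h2 : 0 < 4 - m ^ 2 + s - 2 * m ^ 2 * u := by linarith
    nlinarith [mul_pos h1 h2, hs2, hm2]
  refine ⟨Real.arccos (Real.sqrt c), ?_, ?_, ?_⟩
  · exact ⟨Real.arccos_pos.mpr hsc1, Real.arccos_lt_pi_div_two.mpr hsc0⟩
  · rw [Real.cos_arccos (by linarith) hsc1.le, Real.sq_sqrt hc0.le, ← hc_eq, hs_eq]
  · intro x hx
    have hxc_mem : Real.arccos (Real.sqrt c) ∈ Set.Ioo 0 (Real.pi / 2) :=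
      ⟨Real.arccos_pos.mpr hsc1, Real.arccos_lt_pi_div_two.mpr hsc0⟩
    have hxc_cos : Real.cos (Real.arccos (Real.sqrt c)) = Real.sqrt c :=
      Real.cos_arccos (by linarith) hsc1.le
    have hxc_sq : Real.cos (Real.arccos (Real.sqrt c)) ^ 2 = c := by
      rw [hxc_cos, Real.sq_sqrt hc0.le]
    have hxpi : x ∈ Set.Icc 0 Real.pi := ⟨hx.1.le, by linarith [hx.2]⟩
    have hxcpi : Real.arccos (Real.sqrt c) ∈ Set.Icc 0 Real.pi :=
      ⟨hxc_mem.1.le, by linarith [hxc_mem.2]⟩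
    have hcosx_pos : 0 < Real.cos x :=
      Real.cos_pos_of_mem_Ioo ⟨by linarith [hx.1], hx.2⟩
    have hu1 : Real.cos x ^ 2 ≤ 1 := by
      nlinarith [Real.cos_le_one x, hcosx_pos]
    have hsin : Real.sin x ^ 2 = 1 - Real.cos x ^ 2 := Real.sin_sq x
    have hd : 0 < 1 - m ^ 2 * (1 - Real.cos x ^ 2) := by
      nlinarith [mul_nonneg hm2.le (sq_nonneg (Real.cos x))]
    have hrw : Ω x = (m ^ 2 / 4) *
        (m ^ 2 * (Real.cos x ^ 2) ^ 2 + (m ^ 2 - 4) * Real.cos x ^ 2 + 2 * (1 - m ^ 2)) /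
        (1 - m ^ 2 * (1 - Real.cos x ^ 2)) ^ 2 := by
      rw [hΩ x, hsin]; ring_nf
    constructor
    · intro hlt
      have hcc : Real.cos (Real.arccos (Real.sqrt c)) < Real.cos x :=
        Real.strictAntiOn_cos hxpi hxcpi hlt
      have hc_lt : c < Real.cos x ^ 2 := by
        rw [← hxc_sq]
        exact pow_lt_pow_left₀ hcc (hxc_cos.symm ▸ hsc0.le) two_ne_zero
      have hNx := keyneg (Real.cos x ^ 2) hc_lt hu1
      rw [hrw]
      exact div_neg_of_neg_of_pos (mul_neg_of_pos_of_neg (by positivity) hNx)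
        (pow_pos hd 2)
    · intro hlt
      have hcc : Real.cos x < Real.cos (Real.arccos (Real.sqrt c)) :=
        Real.strictAntiOn_cos hxcpi hxpi hlt
      have hc_gt : Real.cos x ^ 2 < c := by
        rw [← hxc_sq]
        exact pow_lt_pow_left₀ hcc hcosx_pos.le two_ne_zero
      have hNx := keypos (Real.cos x ^ 2) hc_gt
      rw [hrw]
      exact div_pos (mul_pos (by positivity) hNx) (pow_pos hd 2)
end

section
/- For the elliptic case, Ω'(x) = -(m²sin x cos x/2)·(3m²(2-m²)cos²x + 3m⁴ + m² - 4)/(1-m²sin²x)³; if 0 < m ≤ 2/√7, then Ω is monotonically increasing on (0, π/2). -/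
/-!
Since `1 - m² sin² x = 1 - m² + m² cos² x`, `Ω = g ∘ cos` for a rational function `g`, and the
formula for `Ω'` is the chain rule. The factor `3m²(2-m²)c² + 3m⁴ + m² - 4` is increasing in
`c² = cos² x` and equals `7m² - 4` at `c² = 1`, so it is negative on `(0, π/2)` once `7m² ≤ 4`,
i.e. `m ≤ 2/√7`; there `sin x cos x > 0`, hence `Ω' > 0`.
-/

open Real Set

lemma one_sub_sq_mul_sin_sq (m x : ℝ) :
    1 - m ^ 2 * sin x ^ 2 = 1 - m ^ 2 + m ^ 2 * cos x ^ 2 := by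
  rw [sin_sq]; ring

lemma one_sub_sq_mul_sin_sq_pos {m : ℝ} (hm : m ^ 2 < 1) (x : ℝ) :
    0 < 1 - m ^ 2 * sin x ^ 2 := by
  nlinarith [mul_nonneg (sq_nonneg m) (sub_nonneg.2 (sin_sq_le_one x))]

lemma hasDerivAt_omega_rational (m : ℝ) {c : ℝ} (hc : 1 - m ^ 2 + m ^ 2 * c ^ 2 ≠ 0) :
    HasDerivAt (fun c => m ^ 2 / 4 * (m ^ 2 * c ^ 4 + (m ^ 2 - 4) * c ^ 2 + 2 * (1 - m ^ 2)) /
        (1 - m ^ 2 + m ^ 2 * c ^ 2) ^ 2)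
      (m ^ 2 * c / 2 * (3 * m ^ 2 * (2 - m ^ 2) * c ^ 2 + 3 * m ^ 4 + m ^ 2 - 4) /
        (1 - m ^ 2 + m ^ 2 * c ^ 2) ^ 3) c := by
  have hnum := ((((hasDerivAt_pow 4 c).const_mul (m ^ 2)).fun_add
    ((hasDerivAt_pow 2 c).const_mul (m ^ 2 - 4))).add_const (2 * (1 - m ^ 2))).const_mul (m ^ 2 / 4)
  have hden := (((hasDerivAt_pow 2 c).const_mul (m ^ 2)).const_add (1 - m ^ 2)).fun_pow 2
  refine (hnum.div hden (pow_ne_zero 2 hc)).congr_deriv ?_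
  field_simp
  ring

lemma hasDerivAt_omega (m : ℝ) {x : ℝ} (hx : 1 - m ^ 2 * sin x ^ 2 ≠ 0) :
    HasDerivAt (fun y => m ^ 2 / 4 *
        (m ^ 2 * cos y ^ 4 + (m ^ 2 - 4) * cos y ^ 2 + 2 * (1 - m ^ 2)) /
        (1 - m ^ 2 * sin y ^ 2) ^ 2)
      (-(m ^ 2 * sin x * cos x / 2) *
        (3 * m ^ 2 * (2 - m ^ 2) * cos x ^ 2 + 3 * m ^ 4 + m ^ 2 - 4) /
        (1 - m ^ 2 * sin x ^ 2) ^ 3) x := by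
  simp only [one_sub_sq_mul_sin_sq] at hx ⊢
  exact ((hasDerivAt_omega_rational m hx).comp x (hasDerivAt_cos x)).congr_deriv (by ring)

lemma sq_le_of_le_two_div_sqrt_seven {m : ℝ} (hm0 : 0 ≤ m) (hm : m ≤ 2 / √7) :
    7 * m ^ 2 ≤ 4 := by
  have h : m * √7 ≤ 2 := (le_div_iff₀ (by positivity)).1 hm
  have := pow_le_pow_left₀ (by positivity) h 2
  rw [mul_pow, sq_sqrt (by norm_num), mul_comm] at this
  linarith

lemma omega_factor_neg {m c : ℝ} (hm0 : 0 < m ^ 2) (hm : 7 * m ^ 2 ≤ 4) (hc : c ^ 2 < 1) :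
    3 * m ^ 2 * (2 - m ^ 2) * c ^ 2 + 3 * m ^ 4 + m ^ 2 - 4 < 0 := by
  have hpos : 0 < 3 * m ^ 2 * (2 - m ^ 2) * (1 - c ^ 2) := by
    have : 0 < 2 - m ^ 2 := by linarith
    have : 0 < 1 - c ^ 2 := by linarith
    positivity
  linear_combination hm + hpos

lemma omega_deriv_pos {m x : ℝ} (hm0 : 0 < m) (hm : 7 * m ^ 2 ≤ 4) (hx : x ∈ Ioo 0 (π / 2)) :
    0 < -(m ^ 2 * sin x * cos x / 2) *
        (3 * m ^ 2 * (2 - m ^ 2) * cos x ^ 2 + 3 * m ^ 4 + m ^ 2 - 4) /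
        (1 - m ^ 2 * sin x ^ 2) ^ 3 := by
  have hsin : 0 < sin x := sin_pos_of_pos_of_lt_pi hx.1 (by linarith [hx.2, pi_pos])
  have hcos : 0 < cos x := cos_pos_of_mem_Ioo ⟨by linarith [hx.1, pi_pos], hx.2⟩
  have hcos_sq : cos x ^ 2 < 1 := by nlinarith [sin_sq_add_cos_sq x]
  have hden := one_sub_sq_mul_sin_sq_pos (m := m) (by linarith) x
  refine div_pos (mul_pos_of_neg_of_neg ?_ (omega_factor_neg (by positivity) hm hcos_sq)) ?_
  · exact neg_neg_of_pos (by positivity)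
  · positivity

/-- For the elliptic case,
`Ω'(x) = -(m²sin x cos x/2)(3m²(2-m²)cos²x + 3m⁴ + m² - 4)/(1-m²sin²x)³` on `(0, π/2)`;
and if `0 < m ≤ 2/√7`, then `Ω` is monotonically increasing on `(0, π/2)`. -/
theorem stmt17 (m : ℝ) (hm0 : 0 < m) (hm1 : m < 1)
    (Ω : ℝ → ℝ)
    (hΩ : ∀ x, Ω x = (m ^ 2 / 4) *
      (m ^ 2 * Real.cos x ^ 4 + (m ^ 2 - 4) * Real.cos x ^ 2 + 2 * (1 - m ^ 2)) /
      (1 - m ^ 2 * Real.sin x ^ 2) ^ 2) :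
    (∀ x ∈ Set.Ioo 0 (Real.pi / 2),
      deriv Ω x = -(m ^ 2 * Real.sin x * Real.cos x / 2) *
        (3 * m ^ 2 * (2 - m ^ 2) * Real.cos x ^ 2 + 3 * m ^ 4 + m ^ 2 - 4) /
        (1 - m ^ 2 * Real.sin x ^ 2) ^ 3) ∧
    (m ≤ 2 / Real.sqrt 7 → StrictMonoOn Ω (Set.Ioo 0 (Real.pi / 2))) := by
  obtain rfl : Ω = _ := funext hΩ
  have hderiv x := hasDerivAt_omega m (one_sub_sq_mul_sin_sq_pos (m := m) (by nlinarith) x).ne'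
  refine ⟨fun x _ => (hderiv x).deriv, fun hm => ?_⟩
  refine strictMonoOn_of_deriv_pos (convex_Ioo _ _)
    (fun x _ => (hderiv x).continuousAt.continuousWithinAt) fun x hx => ?_
  rw [interior_Ioo] at hx
  rw [(hderiv x).deriv]
  exact omega_deriv_pos hm0 (sq_le_of_le_two_div_sqrt_seven hm0.le hm) hx
end

section
/- For m > 2/√7 and m < 1, the interior critical point x_e of Ω with cos²x_e = (3m⁴ + m² - 4)/(3m⁴ - 6m²) satisfies x_e < x_c(m), where x_c(m) is the unique zero of Ω in (0,π/2); consequently Ω(x_e) < 0 and x_e is the location of the minimum of Ω on (0, π/2). -/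
/-!
Writing `t = cos² x`, the function `Ω` becomes a rational function of `t` (`omegaOfCosSq`), and
the identity
`80 (1 - m²) (1 - m² + m² t)² (Ω + c) = (3m²(2 - m²) t - (1 - m²)(3m² + 4))²`,
with `c = (9m⁴ - 16m² + 16) / (80 (1 - m²)) > 0`, shows that `Ω ≥ -c` with equality exactly at
`t = cos² x_e`. The zero `x_c` lies to the right of `x_e` because, with `R = √(9m⁴ + 16(1 - m²))`,
`cos² x_e - cos² x_c = R (6 - 3m² - R) / (6m²(2 - m²))` and `R < 6 - 3m²` when `m < 1`.
-/

open Real Set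

theorem lt_of_cos_sq_lt_cos_sq {x y : ℝ} (hx : x ∈ Icc 0 π) (hy : y ∈ Icc 0 (π / 2))
    (h : cos x ^ 2 < cos y ^ 2) : y < x := by
  have hcos_y : 0 ≤ cos y := cos_nonneg_of_mem_Icc ⟨by linarith [hy.1, pi_pos], hy.2⟩
  have hcos : cos x < cos y :=
    (le_abs_self _).trans_lt <| abs_of_nonneg hcos_y ▸ sq_lt_sq.mp h
  exact (strictAntiOn_cos.lt_iff_gt hx ⟨hy.1, by linarith [hy.2, pi_pos]⟩).mp hcos

noncomputable def omegaOfCosSq (m t : ℝ) : ℝ :=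
  m ^ 2 / 4 * (m ^ 2 * t ^ 2 + (m ^ 2 - 4) * t + 2 * (1 - m ^ 2)) / (1 - m ^ 2 + m ^ 2 * t) ^ 2

section

variable {m : ℝ}

theorem omegaOfCosSq_eq (t : ℝ) (hm : m ^ 2 ≠ 1) (hD : 1 - m ^ 2 + m ^ 2 * t ≠ 0) :
    omegaOfCosSq m t = -((9 * m ^ 4 - 16 * m ^ 2 + 16) / (80 * (1 - m ^ 2))) +
      (3 * m ^ 2 * (2 - m ^ 2) * t - (1 - m ^ 2) * (3 * m ^ 2 + 4)) ^ 2 /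
        (80 * (1 - m ^ 2) * (1 - m ^ 2 + m ^ 2 * t) ^ 2) := by
  have h1m : 1 - m ^ 2 ≠ 0 := sub_ne_zero.mpr hm.symm
  unfold omegaOfCosSq
  field_simp
  ring

theorem neg_le_omegaOfCosSq {t : ℝ} (hm : m ^ 2 < 1) (ht : 0 ≤ t) :
    -((9 * m ^ 4 - 16 * m ^ 2 + 16) / (80 * (1 - m ^ 2))) ≤ omegaOfCosSq m t := by
  have h1m : 0 < 1 - m ^ 2 := sub_pos.mpr hm
  have hD : 0 < 1 - m ^ 2 + m ^ 2 * t := by positivity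
  rw [omegaOfCosSq_eq t hm.ne hD.ne']
  exact le_add_of_nonneg_right (by positivity)

theorem omegaOfCosSq_critical (hm0 : m ≠ 0) (hm : m ^ 2 < 1) :
    omegaOfCosSq m ((1 - m ^ 2) * (3 * m ^ 2 + 4) / (3 * m ^ 2 * (2 - m ^ 2))) =
      -((9 * m ^ 4 - 16 * m ^ 2 + 16) / (80 * (1 - m ^ 2))) := by
  have h1m : 0 < 1 - m ^ 2 := sub_pos.mpr hm
  have h2m : 0 < 2 - m ^ 2 := by linarith
  have hte : 0 ≤ (1 - m ^ 2) * (3 * m ^ 2 + 4) / (3 * m ^ 2 * (2 - m ^ 2)) := by positivity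
  have hD : 0 < 1 - m ^ 2 + m ^ 2 * ((1 - m ^ 2) * (3 * m ^ 2 + 4) / (3 * m ^ 2 * (2 - m ^ 2))) := by
    positivity
  rw [omegaOfCosSq_eq _ hm.ne hD.ne', mul_div_cancel₀ _ (by positivity), sub_self]
  simp

theorem omegaOfCosSq_min_neg (hm : m ^ 2 < 1) :
    -((9 * m ^ 4 - 16 * m ^ 2 + 16) / (80 * (1 - m ^ 2))) < 0 := by
  have h1m : 0 < 1 - m ^ 2 := sub_pos.mpr hm
  have hnum : 0 < 9 * m ^ 4 - 16 * m ^ 2 + 16 := by nlinarith [sq_nonneg (3 * m ^ 2 - 3)]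
  exact neg_neg_of_pos (by positivity)

theorem cosSq_zero_lt_cosSq_critical (hm0 : m ≠ 0) (hm : m ^ 2 < 1) :
    (4 - m ^ 2 - √(9 * m ^ 4 + 16 * (1 - m ^ 2))) / (2 * m ^ 2) <
      (1 - m ^ 2) * (3 * m ^ 2 + 4) / (3 * m ^ 2 * (2 - m ^ 2)) := by
  set R := √(9 * m ^ 4 + 16 * (1 - m ^ 2))
  have h2m : 0 < 2 - m ^ 2 := by linarith
  have hm2 : 0 < m ^ 2 := by positivity
  have hR2 : R ^ 2 = 9 * m ^ 4 + 16 * (1 - m ^ 2) := sq_sqrt (by nlinarith)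
  have hR : 0 < R := sqrt_pos.mpr (by nlinarith)
  have hR_lt : R < 6 - 3 * m ^ 2 := by nlinarith
  have hdiff : (1 - m ^ 2) * (3 * m ^ 2 + 4) / (3 * m ^ 2 * (2 - m ^ 2)) -
      (4 - m ^ 2 - R) / (2 * m ^ 2) = R * (6 - 3 * m ^ 2 - R) / (6 * m ^ 2 * (2 - m ^ 2)) := by
    field_simp
    linear_combination 6 * hR2
  have hpos : 0 < R * (6 - 3 * m ^ 2 - R) / (6 * m ^ 2 * (2 - m ^ 2)) :=
    div_pos (mul_pos hR (by linarith)) (by positivity)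
  linarith

end

theorem stmt18_general (m : ℝ) (hm0 : 2 / Real.sqrt 7 < m) (hm1 : m < 1)
    (Ω : ℝ → ℝ)
    (hΩ : ∀ x, Ω x = (m ^ 2 / 4) *
      (m ^ 2 * Real.cos x ^ 4 + (m ^ 2 - 4) * Real.cos x ^ 2 + 2 * (1 - m ^ 2)) /
      (1 - m ^ 2 * Real.sin x ^ 2) ^ 2)
    (xe : ℝ) (hxe : xe ∈ Set.Ioo 0 (Real.pi / 2))
    (hxe2 : Real.cos xe ^ 2 = (3 * m ^ 4 + m ^ 2 - 4) / (3 * m ^ 4 - 6 * m ^ 2))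
    (xc : ℝ) (hxc : xc ∈ Set.Ioo 0 (Real.pi / 2))
    (hxc2 : Real.cos xc ^ 2 =
      (4 - m ^ 2 - Real.sqrt (9 * m ^ 4 + 16 * (1 - m ^ 2))) / (2 * m ^ 2)) :
    xe < xc ∧ Ω xe < 0 ∧ IsMinOn Ω (Set.Ioo 0 (Real.pi / 2)) xe := by
  have hm : 0 < m := lt_trans (by positivity) hm0
  have hm_sq : m ^ 2 < 1 := by nlinarith
  have hΩ_cos : ∀ x, Ω x = omegaOfCosSq m (cos x ^ 2) := fun x => by
    rw [hΩ, sin_sq, omegaOfCosSq]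
    ring
  have hcos_xe : cos xe ^ 2 = (1 - m ^ 2) * (3 * m ^ 2 + 4) / (3 * m ^ 2 * (2 - m ^ 2)) := by
    rw [hxe2, div_eq_div_iff (by nlinarith) (by nlinarith)]
    ring
  have hΩ_xe : Ω xe = -((9 * m ^ 4 - 16 * m ^ 2 + 16) / (80 * (1 - m ^ 2))) := by
    rw [hΩ_cos, hcos_xe, omegaOfCosSq_critical hm.ne' hm_sq]
  refine ⟨?_, hΩ_xe ▸ omegaOfCosSq_min_neg hm_sq, isMinOn_iff.mpr fun x _ => ?_⟩
  · refine lt_of_cos_sq_lt_cos_sq ⟨hxc.1.le, by linarith [hxc.2, pi_pos]⟩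
      ⟨hxe.1.le, hxe.2.le⟩ ?_
    rw [hxc2, hcos_xe]
    exact cosSq_zero_lt_cosSq_critical hm.ne' hm_sq
  · rw [hΩ_xe, hΩ_cos]
    exact neg_le_omegaOfCosSq hm_sq (sq_nonneg _)

/-- For `2/√7 < m < 1`, the interior critical point `x_e ∈ (0, π/2)` of `Ω`, with
`cos²x_e = (3m⁴ + m² - 4)/(3m⁴ - 6m²)`, satisfies `x_e < x_c(m)` where `x_c(m)` is the
unique zero of `Ω` in `(0, π/2)` (`cos²x_c = (4-m²-√(9m⁴+16(1-m²)))/(2m²)`);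
consequently `Ω(x_e) < 0` and `x_e` is the location of the minimum of `Ω` on
`(0, π/2)`. -/
theorem stmt18 (m : ℝ) (hm0 : 2 / Real.sqrt 7 < m) (hm1 : m < 1)
    (Ω : ℝ → ℝ)
    (hΩ : ∀ x, Ω x = (m ^ 2 / 4) *
      (m ^ 2 * Real.cos x ^ 4 + (m ^ 2 - 4) * Real.cos x ^ 2 + 2 * (1 - m ^ 2)) /
      (1 - m ^ 2 * Real.sin x ^ 2) ^ 2)
    (xe : ℝ) (hxe : xe ∈ Set.Ioo 0 (Real.pi / 2))
    (hxe2 : Real.cos xe ^ 2 = (3 * m ^ 4 + m ^ 2 - 4) / (3 * m ^ 4 - 6 * m ^ 2))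
    (xc : ℝ) (hxc : xc ∈ Set.Ioo 0 (Real.pi / 2))
    (hxc2 : Real.cos xc ^ 2 =
      (4 - m ^ 2 - Real.sqrt (9 * m ^ 4 + 16 * (1 - m ^ 2))) / (2 * m ^ 2))
    (hxcz : Ω xc = 0) :
    xe < xc ∧ Ω xe < 0 ∧ IsMinOn Ω (Set.Ioo 0 (Real.pi / 2)) xe :=
  stmt18_general m hm0 hm1 Ω hΩ xe hxe hxe2 xc hxc hxc2
end
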